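/- arXiv:1710.06262 — 9 statements merged into one kernel-verified Lean document; each statement's English description precedes it below -/
import Mathlib

section
/- Let H > 0 and define λ₁ : {(ρ,q) ∈ ℝ² : ρ < 1} → ℝ by λ₁(ρ,q) = −Hq/(1−ρ) and r₁(ρ,q) = (1, −Hq/(1−ρ)). Then for every (ρ,q) with 0 ≤ ρ < 1, the function λ₁ is differentiable at (ρ,q) and its directional derivative in the direction r₁(ρ,q) equals Hq(H−1)/(1−ρ)². In particular this quantity vanishes for all (ρ,q) with q ≠ 0 if and only if H = 1, so for H = 1 the first characteristic field is linearly degenerate, while for H ≠ 1 it is genuinely nonlinear wherever q ≠ 0. -/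
open ContinuousLinearMap

theorem hasFDerivAt_mul_snd_div_one_sub_fst (c ρ q : ℝ) (hρ : ρ ≠ 1) :
    HasFDerivAt (fun p : ℝ × ℝ => c * p.2 / (1 - p.1))
      ((c * q / (1 - ρ) ^ 2) • fst ℝ ℝ ℝ + (c / (1 - ρ)) • snd ℝ ℝ ℝ) (ρ, q) := by
  have hden : (1 : ℝ) - ρ ≠ 0 := sub_ne_zero.mpr hρ.symm
  have hnum : HasFDerivAt (fun p : ℝ × ℝ => c * p.2) (c • snd ℝ ℝ ℝ) (ρ, q) :=
    (hasFDerivAt_snd (p := ((ρ, q) : ℝ × ℝ))).const_mul c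
  have hdenom : HasFDerivAt (fun p : ℝ × ℝ => 1 - p.1) (-fst ℝ ℝ ℝ) (ρ, q) := by
    simpa using (hasFDerivAt_fst (p := ((ρ, q) : ℝ × ℝ))).const_sub 1
  have hrecip : HasFDerivAt (fun p : ℝ × ℝ => (1 - p.1)⁻¹)
      ((toSpanSingleton ℝ (-((1 - ρ) ^ 2)⁻¹)).comp (-fst ℝ ℝ ℝ)) (ρ, q) :=
    (hasFDerivAt_inv hden).comp (ρ, q) hdenom
  simp only [div_eq_mul_inv]
  refine (hnum.fun_mul hrecip).congr_fderiv ?_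
  refine ContinuousLinearMap.ext fun v => ?_
  simp only [add_apply, smul_apply, comp_apply, neg_apply, coe_fst', coe_snd',
    toSpanSingleton_apply, smul_eq_mul]
  field_simp

/-- The first characteristic field λ₁(ρ,q) = -Hq/(1-ρ), r₁ = (1, -Hq/(1-ρ)):
λ₁ is differentiable with ∇λ₁·r₁ = Hq(H-1)/(1-ρ)²; this vanishes for all q ≠ 0
iff H = 1 (linear degeneracy vs genuine nonlinearity). -/
theorem stmt1 (H : ℝ) (hH : 0 < H) :
    (∀ ρ q : ℝ, 0 ≤ ρ → ρ < 1 →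
      DifferentiableAt ℝ (fun p : ℝ × ℝ => -H * p.2 / (1 - p.1)) (ρ, q) ∧
      fderiv ℝ (fun p : ℝ × ℝ => -H * p.2 / (1 - p.1)) (ρ, q) (1, -H * q / (1 - ρ)) =
        H * q * (H - 1) / (1 - ρ) ^ 2) ∧
    ((∀ ρ q : ℝ, 0 ≤ ρ → ρ < 1 → q ≠ 0 → H * q * (H - 1) / (1 - ρ) ^ 2 = 0) ↔ H = 1) := by
  refine ⟨fun ρ q _ hρ => ?_, ⟨fun h => ?_, ?_⟩⟩
  · have hderiv := hasFDerivAt_mul_snd_div_one_sub_fst (-H) ρ q hρ.ne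
    refine ⟨hderiv.differentiableAt, ?_⟩
    have hden : (1 : ℝ) - ρ ≠ 0 := sub_ne_zero.mpr hρ.ne'
    rw [hderiv.fderiv]
    simp only [add_apply, smul_apply, coe_fst', coe_snd', smul_eq_mul]
    field_simp
    ring
  · simpa [hH.ne', sub_eq_zero] using h 0 1 le_rfl one_pos one_ne_zero
  · rintro rfl ρ q - - -
    ring
end

section
/- Let H > 0, 0 ≤ ρ_R < 1 and z_R ∈ ℝ. The function z(ρ) = (H(ρ−ρ_R) + z_R (1−ρ_R)^H)/(1−ρ)^H satisfies: (i) z(ρ_R) = z_R; (ii) z′(ρ) = H z(ρ)/(1−ρ) + H/(1−ρ)^H for all ρ ∈ [0,1), so it is an integral curve of the second characteristic field; (iii) z(ρ)(1−ρ)^H − z_R(1−ρ_R)^H = H(ρ−ρ_R) for all ρ ∈ [0,1), i.e. the Rankine–Hugoniot conditions (1/H)(z(1−ρ)^H − z_R(1−ρ_R)^H) = s(ρ−ρ_R) and z−z_R = s(z−z_R) hold along this curve with speed s = 1. Hence the 2-shock curve and the 2-integral curve coincide. -/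
/-!
Along the curve, `z (1 - ρ)^H` is the affine function `H (ρ - ρR) + zR (1 - ρR)^H`. Its slope `H`
is exactly the first Rankine–Hugoniot condition with `s = 1`, the second being trivial for
`s = 1`; and differentiating `z = (affine) · (1 - ρ)^(-H)` by the quotient rule gives the
integral-curve equation. The field is linearly degenerate (`λ₂ ≡ 1`), which is why the two
curves agree.
-/

open Real

theorem hasDerivAt_one_sub_rpow {x : ℝ} (hx : x < 1) (H : ℝ) :
    HasDerivAt (fun ρ : ℝ => (1 - ρ) ^ H) (-(H * (1 - x) ^ H / (1 - x))) x := by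
  have hpos : 0 < 1 - x := sub_pos.2 hx
  convert ((hasDerivAt_id' x).const_sub 1).rpow_const (p := H) (Or.inl hpos.ne') using 1
  rw [rpow_sub hpos, rpow_one]
  ring

theorem HasDerivAt.div_one_sub_rpow {N : ℝ → ℝ} {N' x : ℝ} (hN : HasDerivAt N N' x)
    (hx : x < 1) (H : ℝ) :
    HasDerivAt (fun ρ => N ρ / (1 - ρ) ^ H)
      (H * (N x / (1 - x) ^ H) / (1 - x) + N' / (1 - x) ^ H) x := by
  have hpos : 0 < 1 - x := sub_pos.2 hx
  have hg : (1 - x) ^ H ≠ 0 := (rpow_pos_of_pos hpos H).ne'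
  refine (hN.div (hasDerivAt_one_sub_rpow hx H) hg).congr_deriv ?_
  field_simp
  ring

theorem stmt3_general (H ρR zR : ℝ) (hH : 0 < H) (hρR1 : ρR < 1) :
    let z : ℝ → ℝ := fun ρ => (H * (ρ - ρR) + zR * (1 - ρR) ^ H) / (1 - ρ) ^ H
    z ρR = zR ∧
    (∀ ρ ∈ Set.Ico (0 : ℝ) 1, HasDerivAt z (H * z ρ / (1 - ρ) + H / (1 - ρ) ^ H) ρ) ∧
    (∀ ρ ∈ Set.Ico (0 : ℝ) 1, z ρ * (1 - ρ) ^ H - zR * (1 - ρR) ^ H = H * (ρ - ρR)) ∧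
    (∀ ρ ∈ Set.Ico (0 : ℝ) 1,
      (1 / H) * (z ρ * (1 - ρ) ^ H - zR * (1 - ρR) ^ H) = 1 * (ρ - ρR) ∧
      z ρ - zR = 1 * (z ρ - zR)) := by
  intro z
  have hRH : ∀ ρ ∈ Set.Ico (0 : ℝ) 1,
      z ρ * (1 - ρ) ^ H - zR * (1 - ρR) ^ H = H * (ρ - ρR) := fun ρ hρ => by
    simp only [z, div_mul_cancel₀ _ (rpow_pos_of_pos (sub_pos.2 hρ.2) H).ne']
    ring
  refine ⟨?_, fun ρ hρ => ?_, hRH, fun ρ hρ => ⟨?_, (one_mul _).symm⟩⟩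
  · simp only [z, sub_self, mul_zero, zero_add]
    exact mul_div_cancel_right₀ zR (rpow_pos_of_pos (sub_pos.2 hρR1) H).ne'
  · have hN : HasDerivAt (fun ρ => H * (ρ - ρR) + zR * (1 - ρR) ^ H) H ρ := by
      simpa using (((hasDerivAt_id ρ).sub_const ρR).const_mul H).add_const (zR * (1 - ρR) ^ H)
    exact hN.div_one_sub_rpow hρ.2 H
  · rw [hRH ρ hρ]
    field_simp

/-- The 2-integral curve z(ρ) = (H(ρ-ρ_R) + z_R(1-ρ_R)^H)/(1-ρ)^H passes through
(ρ_R, z_R), solves z' = Hz/(1-ρ) + H/(1-ρ)^H, and satisfies the Rankine–Hugoniot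
conditions with speed s = 1; hence 2-shock and 2-integral curves coincide. -/
theorem stmt3 (H ρR zR : ℝ) (hH : 0 < H) (hρR0 : 0 ≤ ρR) (hρR1 : ρR < 1) :
    let z : ℝ → ℝ := fun ρ => (H * (ρ - ρR) + zR * (1 - ρR) ^ H) / (1 - ρ) ^ H
    z ρR = zR ∧
    (∀ ρ ∈ Set.Ico (0 : ℝ) 1, HasDerivAt z (H * z ρ / (1 - ρ) + H / (1 - ρ) ^ H) ρ) ∧
    (∀ ρ ∈ Set.Ico (0 : ℝ) 1, z ρ * (1 - ρ) ^ H - zR * (1 - ρR) ^ H = H * (ρ - ρR)) ∧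
    (∀ ρ ∈ Set.Ico (0 : ℝ) 1,
      (1 / H) * (z ρ * (1 - ρ) ^ H - zR * (1 - ρR) ^ H) = 1 * (ρ - ρR) ∧
      z ρ - zR = 1 * (z ρ - zR)) :=
  stmt3_general H ρR zR hH hρR1
end

section
/- Let H > 0, ε > 0, F : ℝ → ℝ, and let ρ, q : ℝ × ℝ → ℝ be differentiable functions with 0 ≤ ρ(t,x) < 1 for all (t,x), satisfying at every point the system ∂t ρ + ∂x q = 0 and ∂t q + (Hq/(1−ρ)) ∂x ρ + (1 − Hq/(1−ρ)) ∂x q = −(1/ε)(q − F(ρ)). Then the function z := Hq/(1−ρ)^H satisfies at every point ∂t z + ∂x z = −(1/ε) · H (q − F(ρ))/(1−ρ)^H. -/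
open Topology

section
variable {E : Type*} [NormedAddCommGroup E] [NormedSpace ℝ E] {ρ q : E → ℝ}
  {ρ' q' : E →L[ℝ] ℝ} {p : E}

theorem hasFDerivAt_mul_div_one_sub_rpow (c H : ℝ) (hρ : HasFDerivAt ρ ρ' p)
    (hq : HasFDerivAt q q' p) (hlt : ρ p < 1) :
    HasFDerivAt (fun x => c * q x / (1 - ρ x) ^ H)
      ((c / (1 - ρ p) ^ H) • (q' + (H * q p / (1 - ρ p)) • ρ')) p := by
  have hpos : 0 < 1 - ρ p := sub_pos.2 hlt
  have hpow := (hρ.const_sub 1).rpow_const (p := -H) (Or.inl hpos.ne')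
  have heq : (fun x => c * q x * (1 - ρ x) ^ (-H)) =ᶠ[𝓝 p]
      fun x => c * q x / (1 - ρ x) ^ H := by
    filter_upwards [hρ.continuousAt.eventually (gt_mem_nhds hlt)] with x hx
    rw [Real.rpow_neg (sub_pos.2 hx).le, div_eq_mul_inv]
  refine (((hq.const_mul c).mul hpow).congr_of_eventuallyEq heq.symm).congr_fderiv ?_
  have hsub : (1 - ρ p) ^ (-H - 1) = (1 - ρ p) ^ (-H) / (1 - ρ p) := by
    rw [Real.rpow_sub hpos, Real.rpow_one]
  ext v
  simp only [add_apply, smul_apply, smul_eq_mul, neg_apply, hsub, Real.rpow_neg hpos.le]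
  field_simp
  ring

end

theorem stmt4_general (H ε : ℝ) (F : ℝ → ℝ)
    (ρ q : ℝ × ℝ → ℝ) (hρ : Differentiable ℝ ρ) (hq : Differentiable ℝ q)
    (hbound : ∀ p, 0 ≤ ρ p ∧ ρ p < 1)
    (h1 : ∀ p, fderiv ℝ ρ p (1, 0) + fderiv ℝ q p (0, 1) = 0)
    (h2 : ∀ p, fderiv ℝ q p (1, 0) + (H * q p / (1 - ρ p)) * fderiv ℝ ρ p (0, 1)
        + (1 - H * q p / (1 - ρ p)) * fderiv ℝ q p (0, 1) = -(1 / ε) * (q p - F (ρ p))) :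
    ∀ p, fderiv ℝ (fun p => H * q p / (1 - ρ p) ^ H) p (1, 0)
       + fderiv ℝ (fun p => H * q p / (1 - ρ p) ^ H) p (0, 1)
       = -(1 / ε) * (H * (q p - F (ρ p)) / (1 - ρ p) ^ H) := by
  intro p
  rw [(hasFDerivAt_mul_div_one_sub_rpow H H (hρ p).hasFDerivAt (hq p).hasFDerivAt
    (hbound p).2).fderiv]
  simp only [smul_apply, add_apply, smul_eq_mul]
  -- with `ρ_t = -q_x`, the derivative of `z` along `(1, 1)` is `H / (1 - ρ)^H` times the
  -- left-hand side of the momentum equation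
  linear_combination (H / (1 - ρ p) ^ H) * (h2 p + H * q p / (1 - ρ p) * h1 p)

/-- If (ρ,q) solves the nonlinear discrete-velocity relaxation system, then the
conservative variable z = Hq/(1-ρ)^H satisfies ∂t z + ∂x z = -(1/ε) H (q-F(ρ))/(1-ρ)^H. -/
theorem stmt4 (H ε : ℝ) (hH : 0 < H) (hε : 0 < ε) (F : ℝ → ℝ)
    (ρ q : ℝ × ℝ → ℝ) (hρ : Differentiable ℝ ρ) (hq : Differentiable ℝ q)
    (hbound : ∀ p, 0 ≤ ρ p ∧ ρ p < 1)
    (h1 : ∀ p, fderiv ℝ ρ p (1, 0) + fderiv ℝ q p (0, 1) = 0)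
    (h2 : ∀ p, fderiv ℝ q p (1, 0) + (H * q p / (1 - ρ p)) * fderiv ℝ ρ p (0, 1)
        + (1 - H * q p / (1 - ρ p)) * fderiv ℝ q p (0, 1) = -(1 / ε) * (q p - F (ρ p))) :
    ∀ p, fderiv ℝ (fun p => H * q p / (1 - ρ p) ^ H) p (1, 0)
       + fderiv ℝ (fun p => H * q p / (1 - ρ p) ^ H) p (0, 1)
       = -(1 / ε) * (H * (q p - F (ρ p)) / (1 - ρ p) ^ H) :=
  stmt4_general H ε F ρ q hρ hq hbound h1 h2
end

section
/- Let H > 0 and define on Ω = {(ρ,q) ∈ ℝ² : 0 ≤ ρ < 1} the functions w₁(ρ,q) = ρ − q and w₂(ρ,q) = Hq/(1−ρ)^H. Then at every point of Ω: the directional derivative of w₂ in the direction r₁ = (1, −Hq/(1−ρ)) vanishes, and the directional derivative of w₁ in the direction r₂ = (1, 1) vanishes. That is, w₁ = ρ − q is a 1-Riemann invariant and w₂ = Hq/(1−ρ)^H is a 2-Riemann invariant of the system. -/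
open ContinuousLinearMap

theorem HasFDerivAt.fun_div {𝕜 E : Type*} [NontriviallyNormedField 𝕜] [NormedAddCommGroup E]
    [NormedSpace 𝕜 E] {c d : E → 𝕜} {c' d' : E →L[𝕜] 𝕜} {x : E}
    (hc : HasFDerivAt c c' x) (hd : HasFDerivAt d d' x) (hx : d x ≠ 0) :
    HasFDerivAt (fun y => c y / d y) ((d x)⁻¹ • c' - (c x / d x ^ 2) • d') x := by
  have hinv : HasFDerivAt (fun y => (d y)⁻¹) (-(d x ^ 2)⁻¹ • d') x :=
    (hasDerivAt_inv hx).comp_hasFDerivAt x hd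
  have hmul := hc.fun_mul hinv
  simp only [← div_eq_mul_inv] at hmul
  refine hmul.congr_fderiv (ContinuousLinearMap.ext fun v => ?_)
  simp only [add_apply, sub_apply, smul_apply, smul_eq_mul]
  ring

theorem hasFDerivAt_mul_snd_div_one_sub_fst_rpow (H : ℝ) {ρ : ℝ} (q : ℝ) (hρ : ρ < 1) :
    HasFDerivAt (fun p : ℝ × ℝ => H * p.2 / (1 - p.1) ^ H)
      ((H / (1 - ρ) ^ H) • (snd ℝ ℝ ℝ + (H * q / (1 - ρ)) • fst ℝ ℝ ℝ)) (ρ, q) := by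
  have hpos : 0 < 1 - ρ := sub_pos.mpr hρ
  have hnum : HasFDerivAt (fun p : ℝ × ℝ => H * p.2) (H • snd ℝ ℝ ℝ) (ρ, q) :=
    hasFDerivAt_snd.const_mul H
  have hden : HasFDerivAt (fun p : ℝ × ℝ => (1 - p.1) ^ H)
      ((H * ((1 - ρ) ^ H / (1 - ρ))) • -fst ℝ ℝ ℝ) (ρ, q) := by
    rw [← Real.rpow_sub_one hpos.ne']
    exact (hasFDerivAt_fst.const_sub 1).rpow_const (x := (ρ, q)) (Or.inl hpos.ne')
  refine (hnum.fun_div hden (Real.rpow_pos_of_pos hpos H).ne').congr_fderiv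
    (ContinuousLinearMap.ext fun v => ?_)
  simp only [add_apply, sub_apply, smul_apply, neg_apply, coe_fst', coe_snd', smul_eq_mul]
  field_simp
  ring

theorem fderiv_fst_sub_snd {𝕜 : Type*} [NontriviallyNormedField 𝕜] (x : 𝕜 × 𝕜) :
    fderiv 𝕜 (fun p : 𝕜 × 𝕜 => p.1 - p.2) x = fst 𝕜 𝕜 𝕜 - snd 𝕜 𝕜 𝕜 :=
  (hasFDerivAt_fst.sub hasFDerivAt_snd).fderiv

theorem stmt5_general (H : ℝ) (ρ q : ℝ) (h1 : ρ < 1) :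
    fderiv ℝ (fun p : ℝ × ℝ => H * p.2 / (1 - p.1) ^ H) (ρ, q) (1, -(H * q / (1 - ρ))) = 0 ∧
    fderiv ℝ (fun p : ℝ × ℝ => p.1 - p.2) (ρ, q) (1, 1) = 0 := by
  rw [(hasFDerivAt_mul_snd_div_one_sub_fst_rpow H q h1).fderiv, fderiv_fst_sub_snd]
  simp

/-- w₁ = ρ - q is a 1-Riemann invariant and w₂ = Hq/(1-ρ)^H is a 2-Riemann
invariant: their directional derivatives along r₁ = (1, -Hq/(1-ρ)) and
r₂ = (1,1), respectively, vanish. -/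
theorem stmt5 (H : ℝ) (hH : 0 < H) (ρ q : ℝ) (h0 : 0 ≤ ρ) (h1 : ρ < 1) :
    fderiv ℝ (fun p : ℝ × ℝ => H * p.2 / (1 - p.1) ^ H) (ρ, q) (1, -(H * q / (1 - ρ))) = 0 ∧
    fderiv ℝ (fun p : ℝ × ℝ => p.1 - p.2) (ρ, q) (1, 1) = 0 :=
  stmt5_general H ρ q h1
end

section
/- Let 0 < ρ⋆ < 1, let F : ℝ → ℝ be continuous on [0,1] with F(0) = F(1) = 0, strictly increasing on [0,ρ⋆] and strictly decreasing on [ρ⋆,1], let 0 < C < F(ρ⋆) and H > 0, and let ρ₁ ∈ (0, ρ⋆), ρ₂ ∈ (ρ⋆, 1) be the unique points with F(ρ₁) = C = F(ρ₂). If ρ : [0,∞) → ℝ is differentiable with ρ′(x) = (1−ρ(x))(F(ρ(x))−C)/(HC) for all x ≥ 0 and ρ(0) ∈ (ρ₁, 1), then ρ(x) ∈ (ρ₁, 1) for all x ≥ 0 and ρ(x) → ρ₂ as x → ∞. In particular, ρ₂ is a stable fixed point of the layer equation whose domain of attraction contains the interval (ρ₁, 1). -/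
open Set Filter

/-- Monotonicity on `[s,t]` from nonnegative derivative of an autonomous ODE solution. -/
lemma auxLe (g ρ : ℝ → ℝ) (hode : ∀ x ≥ (0:ℝ), HasDerivAt ρ (g (ρ x)) x)
    (s t : ℝ) (hs : 0 ≤ s) (hst : s ≤ t)
    (hpos : ∀ x ∈ Set.Ioo s t, 0 ≤ g (ρ x)) : ρ s ≤ ρ t := by
  have hm : MonotoneOn ρ (Set.Icc s t) := by
    apply monotoneOn_of_deriv_nonneg (convex_Icc s t)
    · exact fun x hx => (hode x (hs.trans hx.1)).continuousAt.continuousWithinAt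
    · intro x hx
      rw [interior_Icc] at hx
      exact ((hode x (hs.trans hx.1.le)).differentiableAt).differentiableWithinAt
    · intro x hx
      rw [interior_Icc] at hx
      rw [(hode x (hs.trans hx.1.le)).deriv]
      exact hpos x hx
  exact hm ⟨le_refl s, hst⟩ ⟨hst, le_refl t⟩ hst

/-- Antitonicity on `[s,t]` from nonpositive derivative of an autonomous ODE solution. -/
lemma auxGe (g ρ : ℝ → ℝ) (hode : ∀ x ≥ (0:ℝ), HasDerivAt ρ (g (ρ x)) x)
    (s t : ℝ) (hs : 0 ≤ s) (hst : s ≤ t)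
    (hneg : ∀ x ∈ Set.Ioo s t, g (ρ x) ≤ 0) : ρ t ≤ ρ s := by
  have hm : AntitoneOn ρ (Set.Icc s t) := by
    apply antitoneOn_of_deriv_nonpos (convex_Icc s t)
    · exact fun x hx => (hode x (hs.trans hx.1)).continuousAt.continuousWithinAt
    · intro x hx
      rw [interior_Icc] at hx
      exact ((hode x (hs.trans hx.1.le)).differentiableAt).differentiableWithinAt
    · intro x hx
      rw [interior_Icc] at hx
      rw [(hode x (hs.trans hx.1.le)).deriv]
      exact hneg x hx
  exact hm ⟨le_refl s, hst⟩ ⟨hst, le_refl t⟩ hst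

/-- A solution cannot cross upward through a region of negative vector field. -/
lemma no_up (g ρ : ℝ → ℝ) (hode : ∀ x ≥ (0:ℝ), HasDerivAt ρ (g (ρ x)) x)
    (c s t : ℝ) (hs : 0 ≤ s) (hst : s ≤ t) (hρs : ρ s ≤ c)
    (hneg : ∀ x ∈ Set.Ioo s t, c < ρ x → g (ρ x) < 0) : ρ t ≤ c := by
  by_contra hcon
  push_neg at hcon
  set A := Set.Icc s t ∩ ρ ⁻¹' Set.Iic c with hA
  have hcρ : ContinuousOn ρ (Set.Icc s t) :=
    fun x hx => (hode x (hs.trans hx.1)).continuousAt.continuousWithinAt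
  have hAclosed : IsClosed A := hcρ.preimage_isClosed_of_isClosed isClosed_Icc isClosed_Iic
  have hsA : s ∈ A := ⟨⟨le_refl s, hst⟩, hρs⟩
  have hbdd : BddAbove A := ⟨t, fun x hx => hx.1.2⟩
  have hx₂ := hAclosed.csSup_mem ⟨s, hsA⟩ hbdd
  set x₂ := sSup A with hx₂def
  have hx₂t : x₂ < t := by
    rcases lt_or_eq_of_le hx₂.1.2 with h | h
    · exact h
    · exfalso; rw [h] at hx₂; exact absurd hx₂.2 (not_le.2 hcon)
  have hgt : ∀ x ∈ Set.Ioo x₂ t, c < ρ x := by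
    intro x hx
    by_contra hc
    push_neg at hc
    exact absurd (le_csSup hbdd ⟨⟨hx₂.1.1.trans hx.1.le, hx.2.le⟩, hc⟩) (not_le.2 hx.1)
  have hanti : ρ t ≤ ρ x₂ := by
    apply auxGe g ρ hode x₂ t (hs.trans hx₂.1.1) hx₂t.le
    intro x hx
    exact (hneg x ⟨lt_of_le_of_lt hx₂.1.1 hx.1, hx.2⟩ (hgt x hx)).le
  exact absurd (hanti.trans hx₂.2) (not_le.2 hcon)

/-- A solution cannot cross downward through a region of positive vector field. -/
lemma no_down (g ρ : ℝ → ℝ) (hode : ∀ x ≥ (0:ℝ), HasDerivAt ρ (g (ρ x)) x)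
    (c s t : ℝ) (hs : 0 ≤ s) (hst : s ≤ t) (hρs : c ≤ ρ s)
    (hpos : ∀ x ∈ Set.Ioo s t, ρ x < c → 0 < g (ρ x)) : c ≤ ρ t := by
  by_contra hcon
  push_neg at hcon
  set A := Set.Icc s t ∩ ρ ⁻¹' Set.Ici c with hA
  have hcρ : ContinuousOn ρ (Set.Icc s t) :=
    fun x hx => (hode x (hs.trans hx.1)).continuousAt.continuousWithinAt
  have hAclosed : IsClosed A := hcρ.preimage_isClosed_of_isClosed isClosed_Icc isClosed_Ici
  have hsA : s ∈ A := ⟨⟨le_refl s, hst⟩, hρs⟩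
  have hbdd : BddAbove A := ⟨t, fun x hx => hx.1.2⟩
  have hx₂ := hAclosed.csSup_mem ⟨s, hsA⟩ hbdd
  set x₂ := sSup A with hx₂def
  have hx₂t : x₂ < t := by
    rcases lt_or_eq_of_le hx₂.1.2 with h | h
    · exact h
    · exfalso; rw [h] at hx₂; exact absurd hx₂.2 (not_le.2 hcon)
  have hgt : ∀ x ∈ Set.Ioo x₂ t, ρ x < c := by
    intro x hx
    by_contra hc
    push_neg at hc
    exact absurd (le_csSup hbdd ⟨⟨hx₂.1.1.trans hx.1.le, hx.2.le⟩, hc⟩) (not_le.2 hx.1)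
  have hmono : ρ x₂ ≤ ρ t := by
    apply auxLe g ρ hode x₂ t (hs.trans hx₂.1.1) hx₂t.le
    intro x hx
    exact (hpos x ⟨lt_of_le_of_lt hx₂.1.1 hx.1, hx.2⟩ (hgt x hx)).le
  exact absurd (hx₂.2.trans hmono) (not_le.2 hcon)

/-- Left boundary layer: solutions of ρ' = (1-ρ)(F(ρ)-C)/(HC) starting in
(ρ₁,1) stay in (ρ₁,1) and converge to the stable fixed point ρ₂. -/
theorem stmt12 (ρs C H ρ1 ρ2 : ℝ) (F : ℝ → ℝ)
    (hρs0 : 0 < ρs) (hρs1 : ρs < 1)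
    (hcont : ContinuousOn F (Set.Icc 0 1))
    (hF0 : F 0 = 0) (hF1 : F 1 = 0)
    (hmono : StrictMonoOn F (Set.Icc 0 ρs))
    (hanti : StrictAntiOn F (Set.Icc ρs 1))
    (hC0 : 0 < C) (hCs : C < F ρs) (hH : 0 < H)
    (hρ1 : ρ1 ∈ Set.Ioo 0 ρs) (hρ2 : ρ2 ∈ Set.Ioo ρs 1)
    (hFρ1 : F ρ1 = C) (hFρ2 : F ρ2 = C)
    (ρ : ℝ → ℝ)
    (hode : ∀ x ≥ (0 : ℝ), HasDerivAt ρ ((1 - ρ x) * (F (ρ x) - C) / (H * C)) x)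
    (hinit : ρ 0 ∈ Set.Ioo ρ1 1) :
    (∀ x ≥ (0 : ℝ), ρ x ∈ Set.Ioo ρ1 1) ∧
    Filter.Tendsto ρ Filter.atTop (nhds ρ2) := by
  set g : ℝ → ℝ := fun u => (1 - u) * (F u - C) / (H * C) with hgdef
  have hode' : ∀ x ≥ (0:ℝ), HasDerivAt ρ (g (ρ x)) x := hode
  have hHC : 0 < H * C := mul_pos hH hC0
  have hρ12 : ρ1 < ρ2 := hρ1.2.trans hρ2.1
  -- sign lemmas
  have sign1 : ∀ u, ρ1 < u → u < ρ2 → 0 < g u := by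
    intro u h1 h2
    have hFu : C < F u := by
      rcases le_total u ρs with h | h
      · rw [← hFρ1]
        exact hmono ⟨hρ1.1.le, hρ1.2.le⟩ ⟨(hρ1.1.trans h1).le, h⟩ h1
      · rw [← hFρ2]
        exact hanti ⟨h, (h2.trans hρ2.2).le⟩ ⟨hρ2.1.le, hρ2.2.le⟩ h2
    have hu1 : u < 1 := h2.trans hρ2.2
    exact div_pos (mul_pos (by linarith) (by linarith)) hHC
  have sign2 : ∀ u, ρ2 < u → u < 1 → g u < 0 := by
    intro u h1 h2
    have hFu : F u < C := by
      rw [← hFρ2]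
      exact hanti ⟨hρ2.1.le, hρ2.2.le⟩ ⟨(hρ2.1.trans h1).le, h2.le⟩ h1
    exact div_neg_of_neg_of_pos (mul_neg_of_pos_of_neg (by linarith) (by linarith)) hHC
  -- invariance
  have hinv : ∀ x ≥ (0:ℝ), ρ x ∈ Set.Ioo ρ1 1 := by
    by_contra hbad
    push_neg at hbad
    obtain ⟨b, hb0, hbnot⟩ := hbad
    set B := Set.Ici (0:ℝ) ∩ ρ ⁻¹' (Set.Ioo ρ1 1)ᶜ with hB
    have hcρ : ContinuousOn ρ (Set.Ici (0:ℝ)) :=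
      fun x hx => (hode' x hx).continuousAt.continuousWithinAt
    have hBclosed : IsClosed B :=
      hcρ.preimage_isClosed_of_isClosed isClosed_Ici isOpen_Ioo.isClosed_compl
    have hBne : B.Nonempty := ⟨b, hb0, hbnot⟩
    have hBbdd : BddBelow B := ⟨0, fun x hx => hx.1⟩
    have hx₀mem := hBclosed.csInf_mem hBne hBbdd
    set x₀ := sInf B with hx₀def
    have hx₀0 : (0:ℝ) ≤ x₀ := hx₀mem.1
    have hbefore : ∀ x, 0 ≤ x → x < x₀ → ρ x ∈ Set.Ioo ρ1 1 := by
      intro x hx hxx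
      by_contra hc
      exact absurd (csInf_le hBbdd ⟨hx, hc⟩) (not_le.2 hxx)
    -- upper bound at x₀
    have hup : ρ x₀ ≤ max (ρ 0) ρ2 := by
      apply no_up g ρ hode' (max (ρ 0) ρ2) 0 x₀ le_rfl hx₀0 (le_max_left _ _)
      intro x hx hcx
      have hmem := hbefore x hx.1.le hx.2
      exact sign2 _ (lt_of_le_of_lt (le_max_right _ _) hcx) hmem.2
    have hdown : min (ρ 0) ρ2 ≤ ρ x₀ := by
      apply no_down g ρ hode' (min (ρ 0) ρ2) 0 x₀ le_rfl hx₀0 (min_le_left _ _)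
      intro x hx hcx
      have hmem := hbefore x hx.1.le hx.2
      exact sign1 _ hmem.1 (lt_of_lt_of_le hcx (min_le_right _ _))
    have h1 : ρ1 < min (ρ 0) ρ2 := lt_min hinit.1 hρ12
    have h2 : max (ρ 0) ρ2 < 1 := max_lt hinit.2 hρ2.2
    exact hx₀mem.2 ⟨lt_of_lt_of_le h1 hdown, lt_of_le_of_lt hup h2⟩
  refine ⟨hinv, ?_⟩
  -- convergence
  by_cases hhit : ∃ x ≥ (0:ℝ), ρ x = ρ2
  · obtain ⟨x₀, hx₀0, hx₀⟩ := hhit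
    have hconst : ∀ x ≥ x₀, ρ x = ρ2 := by
      intro t ht
      have h1 : ρ t ≤ ρ2 := by
        apply no_up g ρ hode' ρ2 x₀ t hx₀0 ht (le_of_eq hx₀)
        intro x hx hcx
        exact sign2 _ hcx (hinv x (hx₀0.trans hx.1.le)).2
      have h2 : ρ2 ≤ ρ t := by
        apply no_down g ρ hode' ρ2 x₀ t hx₀0 ht (ge_of_eq hx₀)
        intro x hx hcx
        exact sign1 _ (hinv x (hx₀0.trans hx.1.le)).1 hcx
      linarith
    apply Filter.Tendsto.congr' _ (tendsto_const_nhds : Tendsto (fun _ : ℝ => ρ2) atTop (nhds ρ2))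
    filter_upwards [eventually_ge_atTop x₀] with x hx
    exact (hconst x hx).symm
  · push_neg at hhit
    have hcρ : ContinuousOn ρ (Set.Ici (0:ℝ)) :=
      fun x hx => (hode' x hx).continuousAt.continuousWithinAt
    have htri : (∀ x ≥ (0:ℝ), ρ x < ρ2) ∨ (∀ x ≥ (0:ℝ), ρ2 < ρ x) := by
      by_contra hcon
      push_neg at hcon
      obtain ⟨⟨a, ha0, ha⟩, ⟨b, hb0, hb⟩⟩ := hcon
      have ha' : ρ2 < ρ a := lt_of_le_of_ne ha (fun h => hhit a ha0 h.symm)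
      have hb' : ρ b < ρ2 := lt_of_le_of_ne hb (hhit b hb0)
      rcases le_total a b with hab | hab
      · have := intermediate_value_Icc' hab (hcρ.mono (fun x hx => ha0.trans hx.1))
          (⟨hb'.le, ha'.le⟩ : ρ2 ∈ Set.Icc (ρ b) (ρ a))
        obtain ⟨c, hc, hceq⟩ := this
        exact hhit c (ha0.trans hc.1) hceq
      · have := intermediate_value_Icc hab (hcρ.mono (fun x hx => hb0.trans hx.1))
          (⟨hb'.le, ha'.le⟩ : ρ2 ∈ Set.Icc (ρ b) (ρ a))
        obtain ⟨c, hc, hceq⟩ := this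
        exact hhit c (hb0.trans hc.1) hceq
    rcases htri with hlt | hgt
    · -- increasing towards ρ2
      have hmono2 : ∀ s t : ℝ, 0 ≤ s → s ≤ t → ρ s ≤ ρ t := by
        intro s t hs hst
        apply auxLe g ρ hode' s t hs hst
        intro x hx
        have hx0 : (0:ℝ) ≤ x := hs.trans hx.1.le
        exact (sign1 _ (hinv x hx0).1 (hlt x hx0)).le
      set L := sSup (ρ '' Set.Ici (0:ℝ)) with hLdef
      have hne' : (ρ '' Set.Ici (0:ℝ)).Nonempty := ⟨ρ 0, 0, Set.self_mem_Ici, rfl⟩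
      have hbdd : BddAbove (ρ '' Set.Ici (0:ℝ)) := by
        refine ⟨ρ2, ?_⟩
        rintro _ ⟨x, hx, rfl⟩
        exact (hlt x hx).le
      have hLle : L ≤ ρ2 := csSup_le hne' (by rintro _ ⟨x, hx, rfl⟩; exact (hlt x hx).le)
      have hρle : ∀ x ≥ (0:ℝ), ρ x ≤ L := fun x hx => le_csSup hbdd ⟨x, hx, rfl⟩
      have h0L : ρ 0 ≤ L := hρle 0 le_rfl
      have hL : L = ρ2 := by
        by_contra hLne
        have hLlt : L < ρ2 := lt_of_le_of_ne hLle hLne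
        have hKsub : Set.Icc (ρ 0) L ⊆ Set.Icc (0:ℝ) 1 := by
          intro u hu
          constructor
          · linarith [hρ1.1, hinit.1, hu.1]
          · linarith [hρ2.2, hu.2, hLlt]
        have hKcont : ContinuousOn g (Set.Icc (ρ 0) L) := by
          apply ContinuousOn.div_const
          exact ((continuous_const.sub continuous_id).continuousOn).mul
            ((hcont.mono hKsub).sub continuousOn_const)
        obtain ⟨u₀, hu₀K, hu₀min⟩ :=
          isCompact_Icc.exists_isMinOn ⟨ρ 0, le_refl _, h0L⟩ hKcont
        have hε : 0 < g u₀ :=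
          sign1 u₀ (lt_of_lt_of_le hinit.1 hu₀K.1) (lt_of_le_of_lt hu₀K.2 hLlt)
        set ε := g u₀ with hεdef
        have hder : ∀ x ≥ (0:ℝ), ε ≤ g (ρ x) := by
          intro x hx
          exact hu₀min ⟨hmono2 0 x le_rfl hx, hρle x hx⟩
        -- linear growth
        have hgrow : ∀ x ≥ (0:ℝ), ρ 0 + ε * x ≤ ρ x := by
          intro x hx
          set φ : ℝ → ℝ := fun y => ρ y - ε * y with hφdef
          have hφd : ∀ y ≥ (0:ℝ), HasDerivAt φ (g (ρ y) - ε) y := by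
            intro y hy
            have h2 : HasDerivAt (fun y : ℝ => ε * y) ε y := by
              simpa using (hasDerivAt_id y).const_mul ε
            exact (hode' y hy).sub h2
          have hm : MonotoneOn φ (Set.Icc 0 x) := by
            apply monotoneOn_of_deriv_nonneg (convex_Icc 0 x)
            · exact fun y hy => (hφd y hy.1).continuousAt.continuousWithinAt
            · intro y hy
              rw [interior_Icc] at hy
              exact ((hφd y hy.1.le).differentiableAt).differentiableWithinAt
            · intro y hy
              rw [interior_Icc] at hy
              rw [(hφd y hy.1.le).deriv]
              have := hder y hy.1.le
              linarith
          have := hm ⟨le_refl 0, hx⟩ ⟨hx, le_refl x⟩ hx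
          simp only [hφdef, mul_zero, sub_zero] at this
          linarith
        have hX : (0:ℝ) ≤ (ρ2 - ρ 0) / ε + 1 := by
          have h1 : (0:ℝ) ≤ (ρ2 - ρ 0) / ε :=
            div_nonneg (by linarith [hlt 0 le_rfl]) hε.le
          linarith
        have := hgrow ((ρ2 - ρ 0) / ε + 1) hX
        have heq : ε * ((ρ2 - ρ 0) / ε + 1) = (ρ2 - ρ 0) + ε := by
          field_simp
        have hlt' := hlt ((ρ2 - ρ 0) / ε + 1) hX
        rw [heq] at this
        linarith
      rw [tendsto_order]
      constructor
      · intro b hb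
        rw [← hL] at hb
        obtain ⟨_, ⟨x₀, hx₀0, rfl⟩, hbx₀⟩ := exists_lt_of_lt_csSup hne' hb
        filter_upwards [eventually_ge_atTop x₀] with x hx
        exact lt_of_lt_of_le hbx₀ (hmono2 x₀ x hx₀0 hx)
      · intro b hb
        filter_upwards [eventually_ge_atTop (0:ℝ)] with x hx
        exact lt_of_le_of_lt ((hρle x hx).trans hLle) hb
    · -- decreasing towards ρ2
      have hanti2 : ∀ s t : ℝ, 0 ≤ s → s ≤ t → ρ t ≤ ρ s := by
        intro s t hs hst
        apply auxGe g ρ hode' s t hs hst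
        intro x hx
        have hx0 : (0:ℝ) ≤ x := hs.trans hx.1.le
        exact (sign2 _ (hgt x hx0) (hinv x hx0).2).le
      set L := sInf (ρ '' Set.Ici (0:ℝ)) with hLdef
      have hne' : (ρ '' Set.Ici (0:ℝ)).Nonempty := ⟨ρ 0, 0, Set.self_mem_Ici, rfl⟩
      have hbdd : BddBelow (ρ '' Set.Ici (0:ℝ)) := by
        refine ⟨ρ2, ?_⟩
        rintro _ ⟨x, hx, rfl⟩
        exact (hgt x hx).le
      have hLge : ρ2 ≤ L := le_csInf hne' (by rintro _ ⟨x, hx, rfl⟩; exact (hgt x hx).le)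
      have hρge : ∀ x ≥ (0:ℝ), L ≤ ρ x := fun x hx => csInf_le hbdd ⟨x, hx, rfl⟩
      have h0L : L ≤ ρ 0 := hρge 0 le_rfl
      have hL : L = ρ2 := by
        by_contra hLne
        have hLgt : ρ2 < L := lt_of_le_of_ne hLge (Ne.symm hLne)
        have hKsub : Set.Icc L (ρ 0) ⊆ Set.Icc (0:ℝ) 1 := by
          intro u hu
          constructor
          · linarith [hρ1.1, hρ1.2, hρ2.1, hρs0, hu.1, hLgt]
          · linarith [hinit.2, hu.2]
        have hKcont : ContinuousOn g (Set.Icc L (ρ 0)) := by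
          apply ContinuousOn.div_const
          exact ((continuous_const.sub continuous_id).continuousOn).mul
            ((hcont.mono hKsub).sub continuousOn_const)
        obtain ⟨u₀, hu₀K, hu₀max⟩ :=
          isCompact_Icc.exists_isMaxOn ⟨ρ 0, h0L, le_refl _⟩ hKcont
        have hε : g u₀ < 0 :=
          sign2 u₀ (lt_of_lt_of_le hLgt hu₀K.1) (lt_of_le_of_lt hu₀K.2 hinit.2)
        set ε := -g u₀ with hεdef
        have hεpos : 0 < ε := by simpa [hεdef] using neg_pos.2 hε
        have hder : ∀ x ≥ (0:ℝ), g (ρ x) ≤ -ε := by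
          intro x hx
          have := hu₀max ⟨hρge x hx, hanti2 0 x le_rfl hx⟩
          simpa [hεdef] using this
        have hgrow : ∀ x ≥ (0:ℝ), ρ x ≤ ρ 0 - ε * x := by
          intro x hx
          set φ : ℝ → ℝ := fun y => ρ y + ε * y with hφdef
          have hφd : ∀ y ≥ (0:ℝ), HasDerivAt φ (g (ρ y) + ε) y := by
            intro y hy
            have h2 : HasDerivAt (fun y : ℝ => ε * y) ε y := by
              simpa using (hasDerivAt_id y).const_mul ε
            exact (hode' y hy).add h2
          have hm : AntitoneOn φ (Set.Icc 0 x) := by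
            apply antitoneOn_of_deriv_nonpos (convex_Icc 0 x)
            · exact fun y hy => (hφd y hy.1).continuousAt.continuousWithinAt
            · intro y hy
              rw [interior_Icc] at hy
              exact ((hφd y hy.1.le).differentiableAt).differentiableWithinAt
            · intro y hy
              rw [interior_Icc] at hy
              rw [(hφd y hy.1.le).deriv]
              have := hder y hy.1.le
              linarith
          have := hm ⟨le_refl 0, hx⟩ ⟨hx, le_refl x⟩ hx
          simp only [hφdef, mul_zero, add_zero] at this
          linarith
        have hX : (0:ℝ) ≤ (ρ 0 - ρ2) / ε + 1 := by
          have h1 : (0:ℝ) ≤ (ρ 0 - ρ2) / ε :=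
            div_nonneg (by linarith [hgt 0 le_rfl]) hεpos.le
          linarith
        have := hgrow ((ρ 0 - ρ2) / ε + 1) hX
        have heq : ε * ((ρ 0 - ρ2) / ε + 1) = (ρ 0 - ρ2) + ε := by
          field_simp
        have hgt' := hgt ((ρ 0 - ρ2) / ε + 1) hX
        rw [heq] at this
        linarith
      rw [tendsto_order]
      constructor
      · intro b hb
        filter_upwards [eventually_ge_atTop (0:ℝ)] with x hx
        exact lt_of_lt_of_le (lt_of_lt_of_le hb (hL ▸ hLge : ρ2 ≤ L)) (hρge x hx)
      · intro b hb
        rw [← hL] at hb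
        obtain ⟨_, ⟨x₀, hx₀0, rfl⟩, hbx₀⟩ := exists_lt_of_csInf_lt hne' hb
        filter_upwards [eventually_ge_atTop x₀] with x hx
        exact lt_of_le_of_lt (hanti2 x₀ x hx₀0 hx) hbx₀
end

section
/- Let 0 < ρ⋆ < 1, let F : ℝ → ℝ be continuous on [0,1] with F(0) = F(1) = 0, strictly increasing on [0,ρ⋆] and strictly decreasing on [ρ⋆,1], let 0 < C < F(ρ⋆) and H > 0, and let ρ₁ ∈ (0,ρ⋆), ρ₂ ∈ (ρ⋆,1) be the unique points with F(ρ₁) = C = F(ρ₂). Suppose ρ : [0,∞) → ℝ is differentiable with ρ′(x) = −(1−ρ(x))(F(ρ(x))−C)/(HC) for all x ≥ 0. If ρ(0) ∈ (0, ρ₂) then ρ(x) → ρ₁ as x → ∞; if ρ(0) ∈ (ρ₂, 1) then ρ(x) → 1 as x → ∞. That is, for the right boundary layer ρ₁ is stable with domain of attraction containing (0, ρ₂) and 1 is stable with domain of attraction containing (ρ₂, 1). -/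
/-!
On `[0, 1]` the layer equation is the autonomous scalar ODE `ρ' = g(ρ)` whose field
`g(u) = -(1 - u)(F(u) - C)/(HC)` is positive on `[0, ρ₁)`, negative on `(ρ₁, ρ₂)` and
positive again on `(ρ₂, 1)`. A solution cannot cross a level where `g` points back into a
region, so it is trapped in a compact interval on which `g` has the sign pattern `+ | p | -`
around a single point `p`; there `g` is bounded away from `0` outside every neighbourhood of
`p`, which forces `ρ` into any such neighbourhood in finite time and keeps it there. The only
delicate barrier is the equilibrium `1`, where `g(1) = 0`: since `F ≥ 0` near `1`,
`g(u) ≤ (1 - u)/H`, and comparing `1 - ρ` with a decaying exponential keeps `ρ` below `1`.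
-/

open Set Filter Topology

section AutonomousODE

variable {f g : ℝ → ℝ}

theorem le_of_hasDerivAt_comp_of_neg {s c : ℝ} (hf : ∀ x ≥ s, HasDerivAt f (g (f x)) x)
    (hs : f s ≤ c) (hc : g c < 0) : ∀ x ≥ s, f x ≤ c := fun x hx =>
  image_le_of_deriv_right_lt_deriv_boundary' (f' := fun y => g (f y)) (B' := fun _ => 0)
    (fun y hy => (hf y hy.1).continuousAt.continuousWithinAt)
    (fun y hy => (hf y hy.1).hasDerivWithinAt) hs continuousOn_const
    (fun _ _ => hasDerivWithinAt_const _ _ _) (fun y _ hy => by simpa [hy] using hc)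
    ⟨hx, le_rfl⟩

theorem ge_of_hasDerivAt_comp_of_pos {s c : ℝ} (hf : ∀ x ≥ s, HasDerivAt f (g (f x)) x)
    (hs : c ≤ f s) (hc : 0 < g c) : ∀ x ≥ s, c ≤ f x := fun x hx =>
  image_le_of_deriv_right_lt_deriv_boundary' (f' := fun _ => 0) (B' := fun y => g (f y))
    continuousOn_const (fun _ _ => hasDerivWithinAt_const _ _ _) hs
    (fun y hy => (hf y hy.1).continuousAt.continuousWithinAt)
    (fun y hy => (hf y hy.1).hasDerivWithinAt) (fun y _ hy => by simpa [← hy] using hc)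
    ⟨hx, le_rfl⟩

theorem lt_of_hasDerivAt_comp_of_le_mul_sub {a b K : ℝ} (hK : 0 < K)
    (hf : ∀ x ≥ 0, HasDerivAt f (g (f x)) x) (ha : ∀ x ≥ 0, a ≤ f x) (hb : f 0 < b)
    (hg : ∀ u ∈ Ico a b, g u ≤ K * (b - u)) : ∀ x ≥ 0, f x < b := by
  set d := b - f 0
  have hd : 0 < d := sub_pos.2 hb
  -- compare with `b - d e^{-2Kx}`, which the solution cannot overtake since `2K > K`
  have hB : ∀ x, HasDerivAt (fun y => b - d * Real.exp (-(2 * K) * y))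
      (2 * K * (d * Real.exp (-(2 * K) * x))) x := fun x =>
    ((((hasDerivAt_id x).const_mul (-(2 * K))).exp).const_mul d).const_sub b
      |>.congr_deriv (by simp only [id]; ring)
  intro x hx
  have hfB : f x ≤ b - d * Real.exp (-(2 * K) * x) := by
    refine image_le_of_deriv_right_lt_deriv_boundary (a := 0) (f' := fun y => g (f y))
      (fun y hy => (hf y hy.1).continuousAt.continuousWithinAt)
      (fun y hy => (hf y hy.1).hasDerivWithinAt) (by simp [d]) hB ?_ ⟨hx, le_rfl⟩
    intro y hy hfy
    have hdy : 0 < d * Real.exp (-(2 * K) * y) := by positivity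
    calc g (f y) ≤ K * (b - f y) := hg _ ⟨ha y hy.1, by linarith⟩
      _ = K * (d * Real.exp (-(2 * K) * y)) := by rw [hfy]; ring
      _ < 2 * K * (d * Real.exp (-(2 * K) * y)) := by nlinarith
  linarith [show 0 < d * Real.exp (-(2 * K) * x) by positivity]

theorem eventually_le_of_hasDerivAt_comp {a b p c : ℝ}
    (hf : ∀ x ≥ 0, HasDerivAt f (g (f x)) x)
    (hfab : ∀ x ≥ 0, f x ∈ Icc a b) (hg : ContinuousOn g (Icc a b)) (hap : a ≤ p)
    (hneg : ∀ u ∈ Ioc p b, g u < 0) (hpc : p < c) : ∀ᶠ x in atTop, f x ≤ c := by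
  rcases le_or_gt b c with hbc | hcb
  · exact eventually_atTop.2 ⟨0, fun x hx => (hfab x hx).2.trans hbc⟩
  obtain ⟨m, hm, hgm⟩ : ∃ m > 0, ∀ u ∈ Icc c b, g u ≤ -m := by
    obtain ⟨u₀, hu₀, hmax⟩ := isCompact_Icc.exists_isMaxOn (nonempty_Icc.2 hcb.le)
      (hg.mono (Icc_subset_Icc (by linarith) le_rfl))
    exact ⟨-g u₀, by linarith [hneg u₀ ⟨hpc.trans_le hu₀.1, hu₀.2⟩],
      fun u hu => by linarith [isMaxOn_iff.1 hmax u hu]⟩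
  obtain ⟨x₀, hx₀, hfx₀⟩ : ∃ x₀ ≥ 0, f x₀ ≤ c := by
    by_contra! hfc
    -- above `c` the solution decreases at rate at least `m`, so it would leave `[a, b]`
    have hdecay : ∀ x ≥ 0, f x ≤ f 0 - m * x := fun x hx =>
      image_le_of_deriv_right_le_deriv_boundary (f' := fun y => g (f y))
        (B := fun y => f 0 - m * y) (B' := fun _ => -m)
        (fun y hy => (hf y hy.1).continuousAt.continuousWithinAt)
        (fun y hy => (hf y hy.1).hasDerivWithinAt) (by simp) (by fun_prop)
        (fun y _ => (((hasDerivAt_id y).const_mul m).const_sub (f 0)).hasDerivWithinAt.congr_deriv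
          (by simp))
        (fun y hy => hgm _ ⟨(hfc y hy.1).le, (hfab y hy.1).2⟩) ⟨hx, le_rfl⟩
    set T := (f 0 - a) / m + 1
    have hT : m * T = f 0 - a + m := by rw [mul_add, mul_div_cancel₀ _ hm.ne', mul_one]
    have hT0 : 0 ≤ T :=
      add_nonneg (div_nonneg (sub_nonneg.2 (hfab 0 le_rfl).1) hm.le) zero_le_one
    linarith [hdecay T hT0, (hfab T hT0).1]
  exact eventually_atTop.2 ⟨x₀, le_of_hasDerivAt_comp_of_neg (fun y hy => hf y (hx₀.trans hy))
    hfx₀ (hneg c ⟨hpc, hcb.le⟩)⟩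

theorem eventually_ge_of_hasDerivAt_comp {a b p c : ℝ}
    (hf : ∀ x ≥ 0, HasDerivAt f (g (f x)) x)
    (hfab : ∀ x ≥ 0, f x ∈ Icc a b) (hg : ContinuousOn g (Icc a b)) (hpb : p ≤ b)
    (hpos : ∀ u ∈ Ico a p, 0 < g u) (hcp : c < p) : ∀ᶠ x in atTop, c ≤ f x := by
  have := eventually_le_of_hasDerivAt_comp (f := fun x => -f x) (g := fun u => -g (-u))
    (a := -b) (b := -a) (p := -p) (c := -c)
    (fun x hx => (hf x hx).neg.congr_deriv (by rw [neg_neg]))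
    (fun x hx => ⟨neg_le_neg (hfab x hx).2, neg_le_neg (hfab x hx).1⟩)
    (hg.comp continuous_neg.continuousOn fun u hu =>
      ⟨by linarith [hu.2], by linarith [hu.1]⟩).neg
    (neg_le_neg hpb)
    (fun u hu => neg_neg_of_pos (hpos (-u) ⟨by linarith [hu.2], by linarith [hu.1]⟩))
    (neg_lt_neg hcp)
  exact this.mono fun x hx => neg_le_neg_iff.1 hx

theorem tendsto_of_hasDerivAt_comp {a b p : ℝ} (hf : ∀ x ≥ 0, HasDerivAt f (g (f x)) x)
    (hfab : ∀ x ≥ 0, f x ∈ Icc a b) (hg : ContinuousOn g (Icc a b)) (hp : p ∈ Icc a b)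
    (hpos : ∀ u ∈ Ico a p, 0 < g u) (hneg : ∀ u ∈ Ioc p b, g u < 0) :
    Tendsto f atTop (𝓝 p) := by
  refine tendsto_order.2 ⟨fun c hc => ?_, fun c hc => ?_⟩
  · filter_upwards [eventually_ge_of_hasDerivAt_comp hf hfab hg hp.2 hpos
      (show (c + p) / 2 < p by linarith)] with x hx
    linarith
  · filter_upwards [eventually_le_of_hasDerivAt_comp hf hfab hg hp.1 hneg
      (show p < (p + c) / 2 by linarith)] with x hx
    linarith

end AutonomousODE

theorem min_lt_of_strictMonoOn_of_strictAntiOn {F : ℝ → ℝ} {a m b x y u : ℝ}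
    (hmono : StrictMonoOn F (Icc a m)) (hanti : StrictAntiOn F (Icc m b)) (hax : a ≤ x)
    (hyb : y ≤ b) (hu : u ∈ Ioo x y) : min (F x) (F y) < F u := by
  rcases le_total u m with hum | hmu
  · exact (min_le_left _ _).trans_lt
      (hmono ⟨hax, by linarith [hu.1]⟩ ⟨by linarith [hu.1], hum⟩ hu.1)
  · exact (min_le_right _ _).trans_lt
      (hanti ⟨hmu, by linarith [hu.2]⟩ ⟨by linarith [hu.2], hyb⟩ hu.2)

noncomputable def layerField (F : ℝ → ℝ) (C H u : ℝ) : ℝ :=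
  -((1 - u) * (F u - C) / (H * C))

section LayerField

variable {F : ℝ → ℝ} {C H u : ℝ}

theorem layerField_pos (hC : 0 < C) (hH : 0 < H) (hu : u < 1) (hF : F u < C) :
    0 < layerField F C H u := by
  unfold layerField
  have : (1 - u) * (F u - C) < 0 := mul_neg_of_pos_of_neg (by linarith) (by linarith)
  exact neg_pos.2 (div_neg_of_neg_of_pos this (by positivity))

theorem layerField_neg (hC : 0 < C) (hH : 0 < H) (hu : u < 1) (hF : C < F u) :
    layerField F C H u < 0 := by
  unfold layerField
  have : 0 < (1 - u) * (F u - C) := mul_pos (by linarith) (by linarith)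
  exact neg_neg_of_pos (div_pos this (by positivity))

theorem layerField_le (hC : 0 < C) (hH : 0 < H) (hu : u ≤ 1) (hF : 0 ≤ F u) :
    layerField F C H u ≤ H⁻¹ * (1 - u) := by
  have : layerField F C H u = H⁻¹ * (1 - u) - (1 - u) * F u / (H * C) := by
    unfold layerField
    field_simp
    ring
  rw [this]
  exact sub_le_self _ (div_nonneg (mul_nonneg (by linarith) hF) (by positivity))

theorem continuousOn_layerField {s : Set ℝ} (hF : ContinuousOn F s) :
    ContinuousOn (layerField F C H) s := by
  unfold layerField
  fun_prop

end LayerField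

theorem stmt13_general (ρs C H ρ1 ρ2 : ℝ) (F : ℝ → ℝ)
    (hρs1 : ρs < 1)
    (hcont : ContinuousOn F (Set.Icc 0 1))
    (hF1 : F 1 = 0)
    (hmono : StrictMonoOn F (Set.Icc 0 ρs))
    (hanti : StrictAntiOn F (Set.Icc ρs 1))
    (hC0 : 0 < C) (hH : 0 < H)
    (hρ1 : ρ1 ∈ Set.Ioo 0 ρs) (hρ2 : ρ2 ∈ Set.Ioo ρs 1)
    (hFρ1 : F ρ1 = C) (hFρ2 : F ρ2 = C)
    (ρ : ℝ → ℝ)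
    (hode : ∀ x ≥ (0 : ℝ), HasDerivAt ρ (-((1 - ρ x) * (F (ρ x) - C) / (H * C))) x) :
    (ρ 0 ∈ Set.Ioo 0 ρ2 → Filter.Tendsto ρ Filter.atTop (nhds ρ1)) ∧
    (ρ 0 ∈ Set.Ioo ρ2 1 → Filter.Tendsto ρ Filter.atTop (nhds 1)) := by
  obtain ⟨hρ10, hρ1s⟩ := hρ1
  obtain ⟨hρ2s, hρ21⟩ := hρ2
  have hode' : ∀ x ≥ 0, HasDerivAt ρ (layerField F C H (ρ x)) x := hode
  have hg : ContinuousOn (layerField F C H) (Icc 0 1) := continuousOn_layerField hcont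
  constructor
  · rintro ⟨h0, h02⟩
    set b := max (ρ 0) ((ρ1 + ρ2) / 2)
    have hb : b ∈ Ioo ρ1 ρ2 := ⟨lt_max_of_lt_right (by linarith), max_lt h02 (by linarith)⟩
    have hpos : ∀ u ∈ Ico 0 ρ1, 0 < layerField F C H u := fun u hu =>
      layerField_pos hC0 hH (by linarith [hu.2])
        (hFρ1 ▸ hmono ⟨hu.1, by linarith [hu.2]⟩ ⟨hρ10.le, hρ1s.le⟩ hu.2)
    have hneg : ∀ u ∈ Ioc ρ1 b, layerField F C H u < 0 := fun u hu =>
      layerField_neg hC0 hH (by linarith [hu.2, hb.2]) (by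
        simpa [hFρ1, hFρ2] using min_lt_of_strictMonoOn_of_strictAntiOn hmono hanti hρ10.le
          hρ21.le ⟨hu.1, hu.2.trans_lt hb.2⟩)
    have htrap : ∀ x ≥ 0, ρ x ∈ Icc 0 b := fun x hx =>
      ⟨ge_of_hasDerivAt_comp_of_pos hode' h0.le (hpos 0 ⟨le_rfl, hρ10⟩) x hx,
        le_of_hasDerivAt_comp_of_neg hode' (le_max_left _ _) (hneg b ⟨hb.1, le_rfl⟩) x hx⟩
    exact tendsto_of_hasDerivAt_comp hode' htrap
      (hg.mono (Icc_subset_Icc le_rfl (by linarith [hb.2]))) ⟨hρ10.le, hb.1.le⟩ hpos hneg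
  · rintro ⟨h20, h01⟩
    have hpos : ∀ u ∈ Ico (ρ 0) 1, 0 < layerField F C H u := fun u hu =>
      layerField_pos hC0 hH hu.2
        (hFρ2 ▸ hanti ⟨hρ2s.le, hρ21.le⟩ ⟨by linarith [hu.1], hu.2.le⟩
          (h20.trans_le hu.1))
    have hlow := ge_of_hasDerivAt_comp_of_pos hode' le_rfl (hpos _ ⟨le_rfl, h01⟩)
    have hup := lt_of_hasDerivAt_comp_of_le_mul_sub (inv_pos.2 hH) hode' hlow h01 fun u hu =>
      layerField_le hC0 hH hu.2.le
        (hF1 ▸ hanti.antitoneOn ⟨by linarith [hu.1], hu.2.le⟩ ⟨hρs1.le, le_rfl⟩ hu.2.le)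
    exact tendsto_of_hasDerivAt_comp hode' (fun x hx => ⟨hlow x hx, (hup x hx).le⟩)
      (hg.mono (Icc_subset_Icc (by linarith) le_rfl)) ⟨h01.le, le_rfl⟩ hpos
      fun u hu => absurd hu.2 (not_le.2 hu.1)

/-- Right boundary layer: for ρ' = -(1-ρ)(F(ρ)-C)/(HC), solutions starting in
(0,ρ₂) converge to ρ₁ and solutions starting in (ρ₂,1) converge to 1. -/
theorem stmt13 (ρs C H ρ1 ρ2 : ℝ) (F : ℝ → ℝ)
    (hρs0 : 0 < ρs) (hρs1 : ρs < 1)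
    (hcont : ContinuousOn F (Set.Icc 0 1))
    (hF0 : F 0 = 0) (hF1 : F 1 = 0)
    (hmono : StrictMonoOn F (Set.Icc 0 ρs))
    (hanti : StrictAntiOn F (Set.Icc ρs 1))
    (hC0 : 0 < C) (hCs : C < F ρs) (hH : 0 < H)
    (hρ1 : ρ1 ∈ Set.Ioo 0 ρs) (hρ2 : ρ2 ∈ Set.Ioo ρs 1)
    (hFρ1 : F ρ1 = C) (hFρ2 : F ρ2 = C)
    (ρ : ℝ → ℝ)
    (hode : ∀ x ≥ (0 : ℝ), HasDerivAt ρ (-((1 - ρ x) * (F (ρ x) - C) / (H * C))) x) :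
    (ρ 0 ∈ Set.Ioo 0 ρ2 → Filter.Tendsto ρ Filter.atTop (nhds ρ1)) ∧
    (ρ 0 ∈ Set.Ioo ρ2 1 → Filter.Tendsto ρ Filter.atTop (nhds 1)) :=
  stmt13_general ρs C H ρ1 ρ2 F hρs1 hcont hF1 hmono hanti hC0 hH hρ1 hρ2 hFρ1 hFρ2 ρ hode
end

section
/- Let F : ℝ → ℝ be differentiable on [0,1] with F(u) ≥ 0, F′(u) ≤ 1, and F(u) + (1−u)F′(u) ≥ 0 for all u ∈ [0,1]. Define the numerical flux G(u,v) = F(u)(1 − v + F(v))/(1 − u + F(u)) for u ∈ [0,1), v ∈ [0,1]. Then: (i) G(u,u) = F(u) for all u ∈ [0,1) (consistency); (ii) for each fixed v ∈ [0,1], the map u ↦ G(u,v) is nondecreasing on [0,1); (iii) for each fixed u ∈ [0,1), the map v ↦ G(u,v) is nonincreasing on [0,1]. Hence the relaxed scheme ρ_i^{n+1} = ρ_i^n − (Δt/Δx)(G(ρ_i^n, ρ_{i+1}^n) − G(ρ_{i−1}^n, ρ_i^n)) is a consistent monotone scheme under the condition F(ρ) + (1−ρ)F′(ρ) ≥ 0.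 -/
/-! The flux factors as `G u v = φ u * ψ v` with `ψ v = 1 - v + F v ≥ 0` and
`φ u = F u / ψ u ≥ 0`. Since `ψ' = F' - 1 ≤ 0`, `ψ` is nonincreasing, and
`φ' = (F u + (1 - u) F' u) / ψ u ^ 2 ≥ 0`, so `φ` is nondecreasing. -/

open Set

lemma Convex.monotoneOn_of_hasDerivAt_nonneg {D : Set ℝ} (hD : Convex ℝ D) {f f' : ℝ → ℝ}
    (hf : ∀ x ∈ D, HasDerivAt f (f' x) x) (hf' : ∀ x ∈ D, 0 ≤ f' x) : MonotoneOn f D :=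
  monotoneOn_of_hasDerivWithinAt_nonneg hD (fun x hx ↦ (hf x hx).continuousAt.continuousWithinAt)
    (fun x hx ↦ (hf x (interior_subset hx)).hasDerivWithinAt)
    (fun x hx ↦ hf' x (interior_subset hx))

lemma Convex.antitoneOn_of_hasDerivAt_nonpos {D : Set ℝ} (hD : Convex ℝ D) {f f' : ℝ → ℝ}
    (hf : ∀ x ∈ D, HasDerivAt f (f' x) x) (hf' : ∀ x ∈ D, f' x ≤ 0) : AntitoneOn f D :=
  antitoneOn_of_hasDerivWithinAt_nonpos hD (fun x hx ↦ (hf x hx).continuousAt.continuousWithinAt)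
    (fun x hx ↦ (hf x (interior_subset hx)).hasDerivWithinAt)
    (fun x hx ↦ hf' x (interior_subset hx))

section Flux

variable {F F' : ℝ → ℝ}

lemma hasDerivAt_one_sub_add {u : ℝ} (hF : HasDerivAt F (F' u) u) :
    HasDerivAt (fun x ↦ 1 - x + F x) (F' u - 1) u :=
  (((hasDerivAt_id' u).const_sub 1).add hF).congr_deriv (by ring)

lemma hasDerivAt_div_one_sub_add {u : ℝ} (hF : HasDerivAt F (F' u) u) (hu : 1 - u + F u ≠ 0) :
    HasDerivAt (fun x ↦ F x / (1 - x + F x)) ((F u + (1 - u) * F' u) / (1 - u + F u) ^ 2) u :=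
  (hF.div (hasDerivAt_one_sub_add hF) hu).congr_deriv (by ring)

lemma antitoneOn_one_sub_add {D : Set ℝ} (hD : Convex ℝ D)
    (hF : ∀ v ∈ D, HasDerivAt F (F' v) v) (hF' : ∀ v ∈ D, F' v ≤ 1) :
    AntitoneOn (fun v ↦ 1 - v + F v) D :=
  hD.antitoneOn_of_hasDerivAt_nonpos (fun v hv ↦ hasDerivAt_one_sub_add (hF v hv))
    (fun v hv ↦ sub_nonpos.2 (hF' v hv))

lemma monotoneOn_div_one_sub_add {D : Set ℝ} (hD : Convex ℝ D)
    (hF : ∀ u ∈ D, HasDerivAt F (F' u) u) (hden : ∀ u ∈ D, 1 - u + F u ≠ 0)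
    (hsub : ∀ u ∈ D, 0 ≤ F u + (1 - u) * F' u) :
    MonotoneOn (fun u ↦ F u / (1 - u + F u)) D :=
  hD.monotoneOn_of_hasDerivAt_nonneg
    (fun u hu ↦ hasDerivAt_div_one_sub_add (hF u hu) (hden u hu))
    (fun u hu ↦ div_nonneg (hsub u hu) (sq_nonneg _))

end Flux

/-- The numerical flux G(u,v) = F(u)(1-v+F(v))/(1-u+F(u)) of the relaxed scheme
is consistent, nondecreasing in u and nonincreasing in v, provided F ≥ 0,
F' ≤ 1 and F(u) + (1-u)F'(u) ≥ 0 on [0,1]; hence the relaxed scheme is a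
consistent monotone scheme. -/
theorem stmt16 (F F' : ℝ → ℝ)
    (hdiff : ∀ u ∈ Set.Icc (0 : ℝ) 1, HasDerivAt F (F' u) u)
    (hpos : ∀ u ∈ Set.Icc (0 : ℝ) 1, 0 ≤ F u)
    (hF'le : ∀ u ∈ Set.Icc (0 : ℝ) 1, F' u ≤ 1)
    (hsub : ∀ u ∈ Set.Icc (0 : ℝ) 1, 0 ≤ F u + (1 - u) * F' u) :
    let G : ℝ → ℝ → ℝ := fun u v => F u * (1 - v + F v) / (1 - u + F u)
    (∀ u ∈ Set.Ico (0 : ℝ) 1, G u u = F u) ∧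
    (∀ v ∈ Set.Icc (0 : ℝ) 1, MonotoneOn (fun u => G u v) (Set.Ico 0 1)) ∧
    (∀ u ∈ Set.Ico (0 : ℝ) 1, AntitoneOn (fun v => G u v) (Set.Icc 0 1)) := by
  intro G
  have hIco : ∀ {u : ℝ}, u ∈ Ico 0 1 → u ∈ Icc 0 1 := fun hu ↦ Ico_subset_Icc_self hu
  have hden : ∀ u ∈ Ico (0 : ℝ) 1, 0 < 1 - u + F u := fun u hu ↦ by
    linarith [hu.2, hpos u (hIco hu)]
  have hfactor : ∀ u v, G u v = F u / (1 - u + F u) * (1 - v + F v) := fun u v ↦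
    mul_div_right_comm _ _ _
  refine ⟨fun u hu ↦ mul_div_cancel_right₀ _ (hden u hu).ne', fun v hv ↦ ?_, fun u hu ↦ ?_⟩
  · have hφ := monotoneOn_div_one_sub_add (convex_Ico 0 1) (fun u hu ↦ hdiff u (hIco hu))
      (fun u hu ↦ (hden u hu).ne') (fun u hu ↦ hsub u (hIco hu))
    intro a ha b hb hab
    simp only [hfactor]
    exact mul_le_mul_of_nonneg_right (hφ ha hb hab) (by linarith [hv.2, hpos v hv])
  · have hψ := antitoneOn_one_sub_add (convex_Icc 0 1) hdiff hF'le
    intro a ha b hb hab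
    simp only [hfactor]
    exact mul_le_mul_of_nonneg_left (hψ ha hb hab) (div_nonneg (hpos u (hIco hu)) (hden u hu).le)
end

section
/- Let H > 0, 0 ≤ ρ_L < 1, q_L > 0, and let ρ_R, q_R satisfy 1 − q_L ≤ ρ_R ≤ 1 and 0 < q_R < ρ_R + q_L − 1. Then there exists a unique ρ_M ∈ (ρ_R − q_R, 1) satisfying ρ_M + q_R − ρ_R = q_L (1−ρ_M)^H/(1−ρ_L)^H. -/
/-- In the cluster regime 1-q_L ≤ ρ_R ≤ 1, 0 < q_R < ρ_R + q_L - 1, there is a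
unique intermediate density ρ_M ∈ (ρ_R - q_R, 1) with
ρ_M + q_R - ρ_R = q_L (1-ρ_M)^H/(1-ρ_L)^H. -/
theorem stmt17 (H ρL qL ρR qR : ℝ) (hH : 0 < H)
    (hρL0 : 0 ≤ ρL) (hρL1 : ρL < 1) (hqL : 0 < qL)
    (hρR1 : 1 - qL ≤ ρR) (hρR2 : ρR ≤ 1)
    (hqR1 : 0 < qR) (hqR2 : qR < ρR + qL - 1) :
    ∃! ρM, ρM ∈ Set.Ioo (ρR - qR) 1 ∧
      ρM + qR - ρR = qL * (1 - ρM) ^ H / (1 - ρL) ^ H := by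
  have hc : (0:ℝ) < (1 - ρL) ^ H := Real.rpow_pos_of_pos (by linarith) H
  set c : ℝ := (1 - ρL) ^ H with hcdef
  set f : ℝ → ℝ := fun x => x - qL * (1 - x) ^ H / c - (ρR - qR) with hf
  have hcont : Continuous f := by
    have h1 : Continuous fun x : ℝ => (1 - x) ^ H :=
      (continuous_const.sub continuous_id).rpow_const (fun x => Or.inr hH.le)
    exact (continuous_id.sub ((continuous_const.mul h1).div_const c)).sub continuous_const
  have hab : ρR - qR < 1 := by linarith
  have hfa : f (ρR - qR) < 0 := by
    have hpos : (0:ℝ) < (1 - (ρR - qR)) ^ H := Real.rpow_pos_of_pos (by linarith) H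
    have h2 : 0 < qL * (1 - (ρR - qR)) ^ H / c := by positivity
    simp only [hf]
    linarith
  have hfb : 0 < f 1 := by
    simp only [hf, sub_self, Real.zero_rpow hH.ne', mul_zero, zero_div]
    linarith
  -- existence via IVT
  obtain ⟨x, hx, hfx⟩ := intermediate_value_Ioo hab.le hcont.continuousOn
    (Set.mem_Ioo.mpr ⟨hfa, hfb⟩)
  -- strict monotonicity on (-∞, 1)
  have mono : ∀ y z : ℝ, y < z → z < 1 → f y < f z := by
    intro y z hyz hz1
    have h1 : (1 - z) ^ H < (1 - y) ^ H :=
      Real.rpow_lt_rpow (by linarith) (by linarith) hH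
    have h2 : qL * (1 - z) ^ H / c < qL * (1 - y) ^ H / c :=
      (div_lt_div_iff_of_pos_right hc).mpr (by nlinarith)
    simp only [hf]
    linarith
  refine ⟨x, ⟨hx, by simp only [hf] at hfx; linarith⟩, ?_⟩
  rintro y ⟨hy, hyeq⟩
  have hfy : f y = 0 := by simp only [hf]; linarith
  rcases lt_trichotomy y x with h | h | h
  · exact absurd (hfx ▸ hfy ▸ mono y x h hx.2) (lt_irrefl 0)
  · exact h
  · exact absurd (hfx ▸ hfy ▸ mono x y h hy.2) (lt_irrefl 0)
end

section
/- Let 0 ≤ ρ_L < 1, q_L > 0, and let ρ_R, q_R satisfy 1 − q_L ≤ ρ_R ≤ 1 and 0 < q_R < ρ_R + q_L − 1. Suppose m : (0,∞) → ℝ is such that for every H > 0, m(H) ∈ (ρ_R − q_R, 1) and m(H) + q_R − ρ_R = q_L (1−m(H))^H/(1−ρ_L)^H. Then m(H) → 1 as H → 0⁺. That is, the intermediate density of the Riemann problem converges to the maximal density 1 in the limit of vanishing look-ahead parameter. -/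
/-!
Write `x(H) = (1 - m(H)) / (1 - ρ_L)`. The defining equation says `q_L x(H)^H = m(H) + q_R - ρ_R`,
and since `m(H) < 1` the right-hand side stays below `1 + q_R - ρ_R < q_L`; so `x(H)^H` is bounded
by a constant `c < 1`. But `ε^H → 1` as `H → 0⁺` for every `ε > 0`, so `x(H) ≥ ε` is eventually
impossible, i.e. `x(H) → 0` and `m(H) → 1`.
-/

open Filter Topology

theorem tendsto_nhds_zero_of_rpow_self_le {f : ℝ → ℝ} {c : ℝ} (hc : c < 1)
    (hf_nonneg : ∀ᶠ H in 𝓝[>] 0, 0 ≤ f H) (hf_le : ∀ᶠ H in 𝓝[>] 0, f H ^ H ≤ c) :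
    Tendsto f (𝓝[>] 0) (𝓝 0) := by
  rw [Metric.tendsto_nhds]
  intro ε hε
  have hε_pow : ∀ᶠ H in 𝓝[>] (0 : ℝ), c < ε ^ H := by
    have hcont : Tendsto (fun H : ℝ => ε ^ H) (𝓝 0) (𝓝 1) := by
      simpa using (Real.continuousAt_const_rpow (b := 0) hε.ne').tendsto
    exact nhdsWithin_le_nhds (hcont (Ioi_mem_nhds hc))
  filter_upwards [hf_nonneg, hf_le, hε_pow, self_mem_nhdsWithin] with H h0 hfc hεc (hH : 0 < H)
  rw [Real.dist_0_eq_abs, abs_of_nonneg h0]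
  by_contra! hεf
  have : ε ^ H ≤ f H ^ H := Real.rpow_le_rpow hε.le hεf hH.le
  linarith

theorem stmt19_general (ρL qL ρR qR : ℝ) (hρL1 : ρL < 1) (hqL : 0 < qL)
    (hqR2 : qR < ρR + qL - 1)
    (m : ℝ → ℝ)
    (hm : ∀ H > (0 : ℝ), m H ∈ Set.Ioo (ρR - qR) 1 ∧
      m H + qR - ρR = qL * (1 - m H) ^ H / (1 - ρL) ^ H) :
    Filter.Tendsto m (nhdsWithin 0 (Set.Ioi 0)) (nhds 1) := by
  have hρL : 0 < 1 - ρL := by linarith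
  set x : ℝ → ℝ := fun H => (1 - m H) / (1 - ρL)
  have hx_nonneg : ∀ᶠ H in 𝓝[>] 0, 0 ≤ x H := by
    filter_upwards [self_mem_nhdsWithin] with H hH
    exact div_nonneg (by linarith [(hm H hH).1.2]) hρL.le
  have hx_pow : ∀ᶠ H in 𝓝[>] 0, x H ^ H ≤ (1 + qR - ρR) / qL := by
    filter_upwards [self_mem_nhdsWithin] with H hH
    obtain ⟨⟨-, hm1⟩, heq⟩ := hm H hH
    rw [mul_div_assoc, ← Real.div_rpow (by linarith) hρL.le] at heq
    rw [le_div_iff₀ hqL]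
    linarith
  have hx : Tendsto x (𝓝[>] 0) (𝓝 0) :=
    tendsto_nhds_zero_of_rpow_self_le (by rw [div_lt_one hqL]; linarith) hx_nonneg hx_pow
  have hm_eq : (fun H => 1 - (1 - ρL) * x H) = m := by
    funext H
    simp only [x]
    field_simp
    ring
  simpa [hm_eq] using (tendsto_const_nhds (x := (1 : ℝ))).sub (hx.const_mul (1 - ρL))

/-- The intermediate density m(H) of the Riemann problem, solving
m + q_R - ρ_R = q_L (1-m)^H/(1-ρ_L)^H with m(H) ∈ (ρ_R - q_R, 1), converges to
the maximal density 1 as the look-ahead parameter H → 0⁺. -/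
theorem stmt19 (ρL qL ρR qR : ℝ) (hρL0 : 0 ≤ ρL) (hρL1 : ρL < 1) (hqL : 0 < qL)
    (hρR1 : 1 - qL ≤ ρR) (hρR2 : ρR ≤ 1)
    (hqR1 : 0 < qR) (hqR2 : qR < ρR + qL - 1)
    (m : ℝ → ℝ)
    (hm : ∀ H > (0 : ℝ), m H ∈ Set.Ioo (ρR - qR) 1 ∧
      m H + qR - ρR = qL * (1 - m H) ^ H / (1 - ρL) ^ H) :
    Filter.Tendsto m (nhdsWithin 0 (Set.Ioi 0)) (nhds 1) :=
  stmt19_general ρL qL ρR qR hρL1 hqL hqR2 m hm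
end
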